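/- Let Ω ⊆ ℝ^N be a bounded open set. For each n ∈ ℕ let y_n : Ω → ℝ^N be injective and differentiable at every point of Ω with det Dy_n(x) > 0 for all x ∈ Ω. Let γ : ℝ → [0, +∞) be a Borel function with γ(h) → +∞ as h → 0⁺, and suppose sup_n ∫_Ω γ(det Dy_n(x)) dx < ∞. Define J_n : ℝ^N → ℝ by J_n(ξ) = (det Dy_n(y_n⁻¹(ξ)))⁻¹ if ξ ∈ y_n(Ω) and J_n(ξ) = 0 otherwise. Then the family (J_n)_n is uniformly integrable over ℝ^N: for every ε > 0 there exists δ > 0 such that for every measurable A ⊆ ℝ^N of Lebesgue measure less than δ one has sup_n ∫_A J_n dξ < ε. -/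

import Mathlib

open MeasureTheory Filter Topology
open scoped ENNReal

/-!
Write `Φ t = t γ(1/t)`. Since `Jₙ(yₙ x) = (det Dyₙ x)⁻¹`, the change of variables `ξ = yₙ x` turns
`∫ Φ(Jₙ) dξ` into `∫_Ω γ(det Dyₙ) dx`, which is at most `C` for every `n`. As `γ(h) → ∞` for
`h → 0⁺`, `Φ` is superlinear: `Φ t ≥ K t` for `t > M`. Splitting `Jₙ` at height `M` then gives the
de la Vallée Poussin bound `∫_A Jₙ ≤ M |A| + C / K`, uniform in `n`, and `K` can be taken large.
-/

theorem setLIntegral_ofReal_le_of_superlinear {α : Type*} [MeasurableSpace α] (μ : Measure α)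
    {Φ : ℝ → ℝ≥0∞} {M K : ℝ} (hK : 0 < K)
    (hΦ : ∀ t, M < t → ENNReal.ofReal K * ENNReal.ofReal t ≤ Φ t) (g : α → ℝ) (A : Set α) :
    ∫⁻ x in A, ENNReal.ofReal (g x) ∂μ
      ≤ ENNReal.ofReal M * μ A + (∫⁻ x, Φ (g x) ∂μ) / ENNReal.ofReal K := by
  have hK₀ : ENNReal.ofReal K ≠ 0 := (ENNReal.ofReal_pos.2 hK).ne'
  have hsplit : ∀ x, ENNReal.ofReal (g x) ≤ ENNReal.ofReal M + Φ (g x) * (ENNReal.ofReal K)⁻¹ := by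
    intro x
    rcases le_or_gt (g x) M with hle | hlt
    · exact (ENNReal.ofReal_le_ofReal hle).trans le_self_add
    · refine le_add_left ?_
      rw [← div_eq_mul_inv, ENNReal.le_div_iff_mul_le (.inl hK₀) (.inl ENNReal.ofReal_ne_top),
        mul_comm]
      exact hΦ _ hlt
  calc ∫⁻ x in A, ENNReal.ofReal (g x) ∂μ
      ≤ ∫⁻ x in A, (ENNReal.ofReal M + Φ (g x) * (ENNReal.ofReal K)⁻¹) ∂μ := lintegral_mono hsplit
    _ = ENNReal.ofReal M * μ A + (∫⁻ x in A, Φ (g x) ∂μ) / ENNReal.ofReal K := by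
      rw [lintegral_add_left measurable_const, setLIntegral_const,
        lintegral_mul_const' _ _ (ENNReal.inv_ne_top.2 hK₀), div_eq_mul_inv]
    _ ≤ _ := by gcongr; exact Measure.restrict_le_self

theorem exists_pos_forall_lt_le_comp_inv {γ : ℝ → ℝ} (hγ : Tendsto γ (𝓝[>] 0) atTop) (K : ℝ) :
    ∃ M > 0, ∀ t, M < t → K ≤ γ t⁻¹ := by
  obtain ⟨a, ha⟩ :=
    eventually_atTop.1 ((hγ.comp tendsto_inv_atTop_nhdsGT_zero).eventually_ge_atTop K)
  exact ⟨max a 1, by positivity, fun t ht => ha t ((le_max_left a 1).trans ht.le)⟩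

theorem ENNReal.exists_pos_div_ofReal_lt {C ε : ℝ≥0∞} (hC : C ≠ ⊤) (hε : 0 < ε) :
    ∃ K : ℝ, 0 < K ∧ C / ENNReal.ofReal K < ε := by
  have hlim : Tendsto (fun K => C / ENNReal.ofReal K) atTop (𝓝 0) := by
    simpa using ENNReal.Tendsto.const_div ENNReal.tendsto_ofReal_atTop (.inr hC)
  obtain ⟨K, hKε, hK⟩ := ((hlim.eventually (gt_mem_nhds hε)).and (eventually_gt_atTop 0)).exists
  exact ⟨K, hK, hKε⟩

theorem ENNReal.ofReal_mul_lt_of_lt_ofReal_div {M b : ℝ} {a : ℝ≥0∞} (hM : 0 < M)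
    (ha : a < ENNReal.ofReal (b / M)) : ENNReal.ofReal M * a < ENNReal.ofReal b := by
  calc ENNReal.ofReal M * a < ENNReal.ofReal M * ENNReal.ofReal (b / M) :=
        ENNReal.mul_lt_mul_right (ENNReal.ofReal_pos.2 hM).ne' ENNReal.ofReal_ne_top ha
    _ = ENNReal.ofReal b := by rw [← ENNReal.ofReal_mul hM.le, mul_div_cancel₀ _ hM.ne']

section InverseJacobian

variable {E : Type*} [NormedAddCommGroup E] [NormedSpace ℝ E] [FiniteDimensional ℝ E]
  [MeasurableSpace E] [BorelSpace E] (μ : Measure E) [μ.IsAddHaarMeasure]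
  {f : E → E} {f' : E → E →L[ℝ] E} {s : Set E}

noncomputable def inverseJacobian (f : E → E) (f' : E → E →L[ℝ] E) (s : Set E) : E → ℝ :=
  (f '' s).indicator fun ξ => ((f' (Function.invFunOn f s ξ)).det)⁻¹

theorem lintegral_image_comp_invFunOn (hs : MeasurableSet s)
    (hf' : ∀ x ∈ s, HasFDerivWithinAt f (f' x) s x) (hf : s.InjOn f) (g : E → ℝ≥0∞) :
    ∫⁻ ξ in f '' s, g (Function.invFunOn f s ξ) ∂μ
      = ∫⁻ x in s, ENNReal.ofReal |(f' x).det| * g x ∂μ := by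
  rw [lintegral_image_eq_lintegral_abs_det_fderiv_mul μ hs hf' hf]
  refine setLIntegral_congr_fun hs fun x hx => ?_
  rw [hf.leftInvOn_invFunOn hx]

theorem lintegral_comp_inverseJacobian (hs : MeasurableSet s)
    (hf' : ∀ x ∈ s, HasFDerivWithinAt f (f' x) s x) (hf : s.InjOn f)
    {Φ : ℝ → ℝ≥0∞} (hΦ : Φ 0 = 0) :
    ∫⁻ ξ, Φ (inverseJacobian f f' s ξ) ∂μ
      = ∫⁻ x in s, ENNReal.ofReal |(f' x).det| * Φ ((f' x).det)⁻¹ ∂μ := by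
  have hcomp : (fun ξ => Φ (inverseJacobian f f' s ξ))
      = (f '' s).indicator fun ξ => Φ ((f' (Function.invFunOn f s ξ)).det)⁻¹ :=
    (Set.indicator_comp_of_zero hΦ).symm
  rw [hcomp, lintegral_indicator (measurable_image_of_fderivWithin hs hf' hf),
    lintegral_image_comp_invFunOn μ hs hf' hf (fun x => Φ ((f' x).det)⁻¹)]

theorem lintegral_inverseJacobian_mul_comp_inv (hs : MeasurableSet s)
    (hf' : ∀ x ∈ s, HasFDerivWithinAt f (f' x) s x) (hf : s.InjOn f)
    (hdet : ∀ x ∈ s, 0 < (f' x).det) (γ : ℝ → ℝ) :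
    ∫⁻ ξ, ENNReal.ofReal (inverseJacobian f f' s ξ)
        * ENNReal.ofReal (γ (inverseJacobian f f' s ξ)⁻¹) ∂μ
      = ∫⁻ x in s, ENNReal.ofReal (γ (f' x).det) ∂μ := by
  rw [lintegral_comp_inverseJacobian μ hs hf' hf
    (Φ := fun t => ENNReal.ofReal t * ENNReal.ofReal (γ t⁻¹)) (by simp)]
  refine setLIntegral_congr_fun hs fun x hx => ?_
  have hd := hdet x hx
  rw [inv_inv, abs_of_pos hd, ← mul_assoc, ← ENNReal.ofReal_mul hd.le, mul_inv_cancel₀ hd.ne',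
    ENNReal.ofReal_one, one_mul]

end InverseJacobian

theorem Matrix.det_mulVecLin_toContinuousLinearMap {𝕜 n : Type*} [NontriviallyNormedField 𝕜]
    [CompleteSpace 𝕜] [Fintype n] [DecidableEq n] (A : Matrix n n 𝕜) :
    (LinearMap.toContinuousLinearMap A.mulVecLin).det = A.det := by
  rw [LinearMap.det_toContinuousLinearMap, ← Matrix.toLin'_apply', LinearMap.det_toLin']

theorem inverse_jacobians_uniformly_integrable_general {N : ℕ} (Ω : Set (Fin N → ℝ))
    (hΩo : IsOpen Ω)
    (y : ℕ → (Fin N → ℝ) → (Fin N → ℝ)) (hinj : ∀ n, Set.InjOn (y n) Ω)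
    (F : ℕ → (Fin N → ℝ) → Matrix (Fin N) (Fin N) ℝ)
    (hdiff : ∀ n, ∀ x ∈ Ω, HasFDerivAt (y n) ((F n x).mulVecLin.toContinuousLinearMap) x)
    (hdet : ∀ n, ∀ x ∈ Ω, 0 < (F n x).det)
    (γ : ℝ → ℝ)
    (hγ_blow : Tendsto γ (nhdsWithin 0 (Set.Ioi 0)) atTop)
    (hbound : ∃ C : ℝ≥0∞, C < ⊤ ∧
      ∀ n, ∫⁻ x in Ω, ENNReal.ofReal (γ ((F n x).det)) ≤ C)
    (J : ℕ → (Fin N → ℝ) → ℝ)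
    (hJ : ∀ n, J n = Set.indicator (y n '' Ω)
      (fun ξ => ((F n (Function.invFunOn (y n) Ω ξ)).det)⁻¹)) :
    ∀ ε : ℝ, 0 < ε → ∃ δ : ℝ, 0 < δ ∧ ∀ A : Set (Fin N → ℝ),
      MeasurableSet A → volume A < ENNReal.ofReal δ →
      ∀ n, ∫⁻ ξ in A, ENNReal.ofReal (J n ξ) < ENNReal.ofReal ε := by
  obtain ⟨C, hC, hCbound⟩ := hbound
  intro ε hε
  have hJ' : ∀ n,
      J n = inverseJacobian (y n) (fun x => (F n x).mulVecLin.toContinuousLinearMap) Ω := by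
    intro n
    simp only [hJ, inverseJacobian, Matrix.det_mulVecLin_toContinuousLinearMap]
  have hchange : ∀ n, ∫⁻ ξ, ENNReal.ofReal (J n ξ) * ENNReal.ofReal (γ (J n ξ)⁻¹)
      = ∫⁻ x in Ω, ENNReal.ofReal (γ ((F n x).det)) := fun n => by
    simpa only [hJ', Matrix.det_mulVecLin_toContinuousLinearMap] using
      lintegral_inverseJacobian_mul_comp_inv volume hΩo.measurableSet
        (fun x hx => (hdiff n x hx).hasFDerivWithinAt) (hinj n)
        (by simpa only [Matrix.det_mulVecLin_toContinuousLinearMap] using hdet n) γ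
  obtain ⟨K, hK, hCK⟩ :=
    ENNReal.exists_pos_div_ofReal_lt hC.ne (ENNReal.ofReal_pos.2 (half_pos hε))
  obtain ⟨M, hM, hγM⟩ := exists_pos_forall_lt_le_comp_inv hγ_blow K
  refine ⟨ε / 2 / M, by positivity, fun A _ hA n => ?_⟩
  calc ∫⁻ ξ in A, ENNReal.ofReal (J n ξ)
      ≤ ENNReal.ofReal M * volume A + (∫⁻ ξ, ENNReal.ofReal (J n ξ)
          * ENNReal.ofReal (γ (J n ξ)⁻¹)) / ENNReal.ofReal K :=
        setLIntegral_ofReal_le_of_superlinear volume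
          (Φ := fun t => ENNReal.ofReal t * ENNReal.ofReal (γ t⁻¹)) hK
          (fun t ht => by rw [mul_comm]; gcongr; exact hγM t ht) _ _
    _ ≤ ENNReal.ofReal M * volume A + C / ENNReal.ofReal K := by
        rw [hchange]; gcongr; exact hCbound n
    _ < ENNReal.ofReal (ε / 2) + ENNReal.ofReal (ε / 2) :=
        ENNReal.add_lt_add (ENNReal.ofReal_mul_lt_of_lt_ofReal_div hM hA) hCK
    _ = ENNReal.ofReal ε := by rw [← ENNReal.ofReal_add (by positivity) (by positivity), add_halves]

/-- Equi-integrability of the Jacobians of the inverse deformations: if `γ ≥ 0` blows up at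
`0⁺` and `∫_Ω γ(det Dyₙ) dx` is uniformly bounded, then the inverse Jacobians `Jₙ` (extended
by zero outside `yₙ(Ω)`) are uniformly integrable over `ℝ^N`. -/
theorem inverse_jacobians_uniformly_integrable {N : ℕ} (Ω : Set (Fin N → ℝ))
    (hΩo : IsOpen Ω) (hΩb : Bornology.IsBounded Ω)
    (y : ℕ → (Fin N → ℝ) → (Fin N → ℝ)) (hinj : ∀ n, Set.InjOn (y n) Ω)
    (F : ℕ → (Fin N → ℝ) → Matrix (Fin N) (Fin N) ℝ)
    (hdiff : ∀ n, ∀ x ∈ Ω, HasFDerivAt (y n) ((F n x).mulVecLin.toContinuousLinearMap) x)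
    (hdet : ∀ n, ∀ x ∈ Ω, 0 < (F n x).det)
    (γ : ℝ → ℝ) (hγ_meas : Measurable γ) (hγ_nonneg : ∀ s, 0 ≤ γ s)
    (hγ_blow : Tendsto γ (nhdsWithin 0 (Set.Ioi 0)) atTop)
    (hbound : ∃ C : ℝ≥0∞, C < ⊤ ∧
      ∀ n, ∫⁻ x in Ω, ENNReal.ofReal (γ ((F n x).det)) ≤ C)
    (J : ℕ → (Fin N → ℝ) → ℝ)
    (hJ : ∀ n, J n = Set.indicator (y n '' Ω)
      (fun ξ => ((F n (Function.invFunOn (y n) Ω ξ)).det)⁻¹)) :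
    ∀ ε : ℝ, 0 < ε → ∃ δ : ℝ, 0 < δ ∧ ∀ A : Set (Fin N → ℝ),
      MeasurableSet A → volume A < ENNReal.ofReal δ →
      ∀ n, ∫⁻ ξ in A, ENNReal.ofReal (J n ξ) < ENNReal.ofReal ε :=
  inverse_jacobians_uniformly_integrable_general Ω hΩo y hinj F hdiff hdet γ hγ_blow hbound J hJ
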